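/- With the Newton iteration v^(0) = α, v^(k+1) = v^(k) - Jac(v^(k), e)^{-1} · h(v^(k), e) as above, for every k ≥ 0 and every i = 1,...,n, one has h_i(v^(k), e) ≡ 0 modulo the ideal ⟨e_1,...,e_m⟩^{2^k} of K[[e_1,...,e_m]]. In particular, the convergence is quadratic: the number of correct coefficients doubles at each iteration. -/

import Mathlib

/-! Write `v⁽ᵏ⁺¹⁾ = v⁽ᵏ⁾ + w` with `Jac(v⁽ᵏ⁾) w = -h(v⁽ᵏ⁾)`. All iterates have constant term `α`,
so their Jacobians stay invertible over `K[[e]]`. If `h(v⁽ᵏ⁾) ∈ ⟨e⟩^(2^k)` then also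
`w ∈ ⟨e⟩^(2^k)`, and in the first-order Taylor expansion `h(v + w) = h(v) + Jac(v) w + O(w²)`
the linear part cancels, leaving `h(v⁽ᵏ⁺¹⁾) ∈ (⟨e⟩^(2^k))² = ⟨e⟩^(2^(k+1))`. -/

noncomputable def polyEval {K : Type*} [Field K] {n m : ℕ}
    (h : Fin n → MvPolynomial (Fin n ⊕ Fin m) K)
    (v : Fin n → MvPowerSeries (Fin m) K) (i : Fin n) : MvPowerSeries (Fin m) K :=
  MvPolynomial.aeval (Sum.elim v (MvPowerSeries.X : Fin m → MvPowerSeries (Fin m) K)) (h i)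

noncomputable def polyJac {K : Type*} [Field K] {n m : ℕ}
    (h : Fin n → MvPolynomial (Fin n ⊕ Fin m) K)
    (v : Fin n → MvPowerSeries (Fin m) K) :
    Matrix (Fin n) (Fin n) (MvPowerSeries (Fin m) K) :=
  Matrix.of fun i j =>
    MvPolynomial.aeval (Sum.elim v (MvPowerSeries.X : Fin m → MvPowerSeries (Fin m) K))
      (MvPolynomial.pderiv (Sum.inl j) (h i))

/-- The Newton iteration `v⁽⁰⁾ = α`, `v⁽ᵏ⁺¹⁾ = v⁽ᵏ⁾ - Jac(v⁽ᵏ⁾,e)⁻¹ · h(v⁽ᵏ⁾,e)`. -/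
noncomputable def newtonIter {K : Type*} [Field K] {n m : ℕ}
    (h : Fin n → MvPolynomial (Fin n ⊕ Fin m) K) (α : Fin n → K) :
    ℕ → (Fin n → MvPowerSeries (Fin m) K)
  | 0 => fun i => (MvPowerSeries.C (α i) : MvPowerSeries (Fin m) K)
  | k + 1 => fun i =>
      newtonIter h α k i -
        ∑ j, (polyJac h (newtonIter h α k))⁻¹ i j * polyEval h (newtonIter h α k) j

open MvPolynomial

section Taylor

variable {K R σ : Type*} [CommSemiring K] [CommRing R] [Algebra K R]

theorem aeval_add_sub_aeval_mem (J : Ideal R) (v w : σ → R) (hw : ∀ s, w s ∈ J)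
    (p : MvPolynomial σ K) : aeval (v + w) p - aeval v p ∈ J := by
  rw [← Ideal.Quotient.eq, ← Ideal.Quotient.mkₐ_eq_mk K, comp_aeval_apply, comp_aeval_apply]
  congr 2
  funext s
  simpa [Ideal.Quotient.eq_zero_iff_mem] using hw s

variable [Fintype σ] [DecidableEq σ]

theorem aeval_add_sub_aeval_sub_sum_pderiv_mem_sq (J : Ideal R) (v w : σ → R)
    (hw : ∀ s, w s ∈ J) (p : MvPolynomial σ K) :
    aeval (v + w) p - aeval v p - ∑ s, aeval v (pderiv s p) * w s ∈ J ^ 2 := by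
  induction p using MvPolynomial.induction_on with
  | C a => simp
  | add p q hp hq =>
    convert add_mem hp hq using 1
    simp only [map_add, add_mul, Finset.sum_add_distrib]
    ring
  | mul_X p s hp =>
    have hsplit : aeval (v + w) (p * X s) - aeval v (p * X s)
          - ∑ t, aeval v (pderiv t (p * X s)) * w t
        = v s * (aeval (v + w) p - aeval v p - ∑ t, aeval v (pderiv t p) * w t)
          + w s * (aeval (v + w) p - aeval v p) := by
      simp only [pderiv_mul, pderiv_X, Pi.single_apply, mul_ite, mul_one, mul_zero, map_add,
        map_mul, aeval_X, apply_ite (aeval v), map_zero, ite_mul, zero_mul, add_mul,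
        Finset.sum_add_distrib, Finset.sum_ite_eq, Finset.mem_univ, if_true,
        mul_right_comm _ (v s), ← Finset.sum_mul, Pi.add_apply]
      ring
    rw [hsplit]
    refine add_mem (Ideal.mul_mem_left _ _ hp) ?_
    rw [sq]
    exact Ideal.mul_mem_mul (hw s) (aeval_add_sub_aeval_mem J v w hw p)

end Taylor

namespace MvPowerSeries

variable {σ R : Type*} [CommSemiring R]

theorem mem_span_range_X_of_constantCoeff_eq_zero [LinearOrder σ] [Fintype σ]
    {f : MvPowerSeries σ R} (hf : constantCoeff f = 0) :
    f ∈ Ideal.span (Set.range X) := by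
  classical
  -- Each monomial of `f` is assigned to the smallest variable it contains.
  let g : σ → MvPowerSeries σ R := fun s d => if d.support.min = s then coeff d f else 0
  have hg : ∀ s d, coeff d (g s) = if d.support.min = s then coeff d f else 0 := fun _ _ => rfl
  have hsum : f = ∑ s, g s := by
    ext d
    simp only [map_sum, hg]
    cases hmin : d.support.min with
    | top =>
      rw [Finset.min_eq_top, Finsupp.support_eq_empty] at hmin
      simp [hmin, hf]
    | coe s₀ => simp
  rw [hsum]
  refine Ideal.sum_mem _ fun s _ => ?_
  have hdvd : X s ∣ g s := X_dvd_iff.2 fun d hds => by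
    rw [hg, if_neg]
    exact fun hmin => Finsupp.mem_support_iff.1 (Finset.mem_of_min hmin) hds
  exact Ideal.mem_of_dvd _ hdvd (Ideal.subset_span ⟨s, rfl⟩)

theorem constantCoeff_aeval {τ : Type*} (f : τ → MvPowerSeries σ R) (p : MvPolynomial τ R) :
    constantCoeff (MvPolynomial.aeval f p)
      = MvPolynomial.aeval (fun i => constantCoeff (f i)) p := by
  induction p using MvPolynomial.induction_on <;> simp_all [algebraMap_apply]

end MvPowerSeries

section Newton

open Matrix
open MvPowerSeries (constantCoeff)

variable {K : Type*} [Field K] {n m : ℕ} (h : Fin n → MvPolynomial (Fin n ⊕ Fin m) K)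

theorem constantCoeff_aeval_sumElim_X (v : Fin n → MvPowerSeries (Fin m) K)
    (p : MvPolynomial (Fin n ⊕ Fin m) K) :
    constantCoeff (aeval (Sum.elim v MvPowerSeries.X) p)
      = aeval (Sum.elim (fun j => constantCoeff (v j)) 0) p := by
  rw [MvPowerSeries.constantCoeff_aeval]
  congr 2 with s
  cases s <;> simp

theorem constantCoeff_newtonIter (α : Fin n → K)
    (hroot : ∀ i, aeval (Sum.elim α (0 : Fin m → K)) (h i) = 0) (k : ℕ) :
    (fun j => constantCoeff (newtonIter h α k j)) = α := by
  induction k with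
  | zero => funext j; simp [newtonIter]
  | succ k ih =>
    funext j
    simp only [newtonIter, polyEval, map_sub, map_sum, map_mul, constantCoeff_aeval_sumElim_X, ih,
      congrFun ih j, hroot, mul_zero, Finset.sum_const_zero, sub_zero]

theorem isUnit_det_polyJac_newtonIter (α : Fin n → K)
    (hroot : ∀ i, aeval (Sum.elim α (0 : Fin m → K)) (h i) = 0)
    (hjac : IsUnit (Matrix.det (Matrix.of fun i j =>
      aeval (Sum.elim α (0 : Fin m → K)) (pderiv (Sum.inl j) (h i))))) (k : ℕ) :
    IsUnit (polyJac h (newtonIter h α k)).det := by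
  rw [MvPowerSeries.isUnit_iff_constantCoeff, RingHom.map_det]
  convert hjac using 2
  ext i j
  rw [RingHom.mapMatrix_apply, Matrix.map_apply, polyJac, Matrix.of_apply,
    constantCoeff_aeval_sumElim_X, constantCoeff_newtonIter h α hroot, Matrix.of_apply]

theorem newtonIter_succ (α : Fin n → K) (k : ℕ) :
    newtonIter h α (k + 1) = newtonIter h α k
      - (polyJac h (newtonIter h α k))⁻¹ *ᵥ polyEval h (newtonIter h α k) :=
  rfl

theorem polyEval_sub_inv_polyJac_mulVec_mem_sq (J : Ideal (MvPowerSeries (Fin m) K))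
    (v : Fin n → MvPowerSeries (Fin m) K) (hv : ∀ j, polyEval h v j ∈ J)
    (hjac : IsUnit (polyJac h v).det) (i : Fin n) :
    polyEval h (v - (polyJac h v)⁻¹ *ᵥ polyEval h v) i ∈ J ^ 2 := by
  set w := -((polyJac h v)⁻¹ *ᵥ polyEval h v)
  have hw : ∀ j, w j ∈ J := fun j => neg_mem <|
    show ∑ l, (polyJac h v)⁻¹ j l * polyEval h v l ∈ J from
      Ideal.sum_mem _ fun l _ => Ideal.mul_mem_left _ _ (hv l)
  have hjac_w : polyJac h v *ᵥ w = -polyEval h v := by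
    rw [Matrix.mulVec_neg, Matrix.mulVec_mulVec, Matrix.mul_nonsing_inv _ hjac, Matrix.one_mulVec]
  have hlinear : ∑ s, aeval (Sum.elim v MvPowerSeries.X) (pderiv s (h i)) * Sum.elim w 0 s
      = -polyEval h v i := by
    simp only [Fintype.sum_sum_type, Sum.elim_inl, Sum.elim_inr, Pi.zero_apply, mul_zero,
      Finset.sum_const_zero, add_zero]
    exact congrFun hjac_w i
  have htaylor := aeval_add_sub_aeval_sub_sum_pderiv_mem_sq J (Sum.elim v MvPowerSeries.X)
    (Sum.elim w 0) (by rintro (j | t); exacts [hw j, zero_mem J]) (h i)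
  convert htaylor using 1
  rw [hlinear, sub_neg_eq_add, polyEval, polyEval, sub_add_cancel, ← Sum.elim_add_add, add_zero,
    sub_eq_add_neg]

end Newton

theorem stmt_3 {K : Type*} [Field K] {n m : ℕ}
    (h : Fin n → MvPolynomial (Fin n ⊕ Fin m) K)
    (α : Fin n → K)
    (hroot : ∀ i, MvPolynomial.aeval (Sum.elim α (0 : Fin m → K)) (h i) = 0)
    (hjac : IsUnit (Matrix.det (Matrix.of fun i j =>
      MvPolynomial.aeval (Sum.elim α (0 : Fin m → K))
        (MvPolynomial.pderiv (Sum.inl j) (h i))))) :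
    ∀ k : ℕ, ∀ i : Fin n,
      polyEval h (newtonIter h α k) i ∈
        (Ideal.span (Set.range (MvPowerSeries.X : Fin m → MvPowerSeries (Fin m) K))) ^ (2 ^ k) := by
  intro k
  induction k with
  | zero =>
    intro i
    rw [pow_zero, pow_one]
    apply MvPowerSeries.mem_span_range_X_of_constantCoeff_eq_zero
    rw [polyEval, constantCoeff_aeval_sumElim_X, constantCoeff_newtonIter h α hroot, hroot]
  | succ k ih =>
    rw [pow_succ, pow_mul, newtonIter_succ]
    exact polyEval_sub_inv_polyJac_mulVec_mem_sq h _ _ ih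
      (isUnit_det_polyJac_newtonIter h α hroot hjac k)
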